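/- Let G be a deficiency-zero reaction network that is not weakly reversible, with V ⊂ Z^n_{≥0}. Then for any positive rate constants k and any initial condition x_0 in the positive orthant whose stoichiometric compatibility class is bounded, the solution x(t) of the mass-action system satisfies liminf_{t→∞} x_i(t) = 0 for at least one index i. -/

import Mathlib

/-- A reaction network with vertices in `ℤ_{≥0}^n` (encoded as `Fin n → ℕ`),
given by its finite set of directed edges. -/
abbrev ReactionEdges (n : ℕ) := Finset ((Fin n → ℕ) × (Fin n → ℕ))

/-- The vertex set: all sources and targets of edges. -/
noncomputable def vertexSet {n : ℕ} (E : ReactionEdges n) : Finset (Fin n → ℕ) :=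
  E.image Prod.fst ∪ E.image Prod.snd

/-- The reaction vector `y' - y ∈ ℝ^n` of an edge `y → y'`. -/
def reactionVector {n : ℕ} (e : (Fin n → ℕ) × (Fin n → ℕ)) : Fin n → ℝ :=
  fun i => (e.2 i : ℝ) - (e.1 i : ℝ)

/-- The stoichiometric subspace: the span of all reaction vectors. -/
noncomputable def stoichSubspace {n : ℕ} (E : ReactionEdges n) :
    Submodule ℝ (Fin n → ℝ) :=
  Submodule.span ℝ { v | ∃ e ∈ E, v = reactionVector e }

/-- The number of linkage classes: the number of connected components of the
underlying undirected graph on the vertex set. -/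
noncomputable def numLinkageClasses {n : ℕ} (E : ReactionEdges n) : ℕ :=
  Nat.card (Quotient (Relation.EqvGen.setoid
    (fun a b : {v // v ∈ vertexSet E} => ((a : Fin n → ℕ), (b : Fin n → ℕ)) ∈ E)))

/-- `G` is weakly reversible iff every edge lies on a directed cycle, i.e. for
every edge `y → y'` there is a directed path from `y'` back to `y`. -/
def WeaklyReversible {n : ℕ} (E : ReactionEdges n) : Prop :=
  ∀ e ∈ E, Relation.ReflTransGen (fun a b => (a, b) ∈ E) e.2 e.1

/-- The mass-action vector field `f_k(x) = ∑_{y→y'∈E} k_{y→y'} x^y (y' - y)`. -/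
noncomputable def massActionField {n : ℕ} (E : ReactionEdges n)
    (k : (Fin n → ℕ) × (Fin n → ℕ) → ℝ) (x : Fin n → ℝ) : Fin n → ℝ :=
  ∑ e ∈ E, (k e * ∏ i, x i ^ e.1 i) • reactionVector e

/-! The potential `u = 1` on the complexes from which the source `y₀` of a non-reversible
reaction `y₀ → y₀'` is reachable, `u = 0` elsewhere, does not increase along reactions and drops
along `y₀ → y₀'`. Deficiency zero makes `complexMap : ℝ^V → ℝ^n`, `δ_y ↦ y`, injective on the
span of the differences `δ_{y'} - δ_y`, so `u` transports to a linear functional `W` with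
`W (y' - y) ≤ 0` on every reaction and `W (y₀' - y₀) < 0`.

A solution stays in its compatibility class, hence is bounded, and by a Gronwall estimate stays
positive. If every `liminf x_i` were positive, then
`d/dt W (x t) ≤ k_{y₀ → y₀'} x^{y₀} W (y₀' - y₀)` would eventually be bounded away from zero, and
`W (x t) → -∞` would contradict boundedness. -/

open Set Filter Topology Module

section Graph

variable {ι : Type*} {R : ι → ι → Prop}

lemma exists_potential_of_not_reflTransGen {a b : ι} (hba : ¬ Relation.ReflTransGen R b a) :
    ∃ u : ι → ℝ, (∀ i j, R i j → u j ≤ u i) ∧ u b < u a := by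
  classical
  refine ⟨fun v => if Relation.ReflTransGen R v a then 1 else 0, fun i j hij => ?_, ?_⟩
  · by_cases hj : Relation.ReflTransGen R j a
    · simp [hj, hj.head hij]
    · simp only [hj, if_false]
      split_ifs <;> norm_num
  · simp [hba, Relation.ReflTransGen.refl]

variable [Fintype ι] [DecidableEq ι]

variable (R) in
noncomputable def edgeSpan : Submodule ℝ (ι → ℝ) :=
  Submodule.span ℝ {Pi.single j 1 - Pi.single i 1 | (i) (j) (_ : R i j)}

lemma edgeSpan_le_ker_linearCombination {c : ι → ℝ} (hc : ∀ i j, R i j → c i = c j) :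
    edgeSpan R ≤ LinearMap.ker (Fintype.linearCombination ℝ c) := by
  rw [edgeSpan, Submodule.span_le]
  rintro _ ⟨i, j, hij, rfl⟩
  simp [Fintype.linearCombination_apply_single, hc i j hij]

lemma finrank_edgeSpan_add_card_quotient_le :
    finrank ℝ (edgeSpan R) + Nat.card (Quotient (Relation.EqvGen.setoid R)) ≤
      Fintype.card ι := by
  classical
  let C := LinearMap.range (LinearMap.funLeft ℝ ℝ (Quotient.mk (Relation.EqvGen.setoid R)))
  have hC : finrank ℝ C = Nat.card (Quotient (Relation.EqvGen.setoid R)) := by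
    rw [LinearMap.finrank_range_of_inj
      (LinearMap.funLeft_injective_of_surjective _ _ _ Quotient.mk_surjective),
      Module.finrank_fintype_fun_eq_card, Nat.card_eq_fintype_card]
  -- `C` consists of the functions constant on the classes of `EqvGen R`; these are orthogonal
  -- to `edgeSpan R`.
  have hdisj : edgeSpan R ⊓ C = ⊥ := by
    refine (Submodule.eq_bot_iff _).2 fun d ⟨hdD, g, hg⟩ => ?_
    have hconst : ∀ i j, R i j → d i = d j := fun i j hij => by
      rw [← hg]
      exact congrArg g (Quotient.sound (Relation.EqvGen.rel _ _ hij))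
    have := edgeSpan_le_ker_linearCombination hconst hdD
    rw [LinearMap.mem_ker, Fintype.linearCombination_apply] at this
    exact dotProduct_self_eq_zero.1 this
  have hsup := Submodule.finrank_sup_add_finrank_inf_eq (edgeSpan R) C
  have hle := (edgeSpan R ⊔ C).finrank_le
  rw [hdisj, finrank_bot, Module.finrank_fintype_fun_eq_card] at *
  omega

lemma exists_functional_of_ker_domRestrict_eq_bot {M : Type*} [AddCommGroup M] [Module ℝ M]
    (Y : (ι → ℝ) →ₗ[ℝ] M) (hY : LinearMap.ker (Y.domRestrict (edgeSpan R)) = ⊥) {a b : ι}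
    (hab : R a b) (hba : ¬ Relation.ReflTransGen R b a) :
    ∃ W : M →ₗ[ℝ] ℝ, (∀ i j, R i j → W (Y (Pi.single j 1 - Pi.single i 1)) ≤ 0) ∧
      W (Y (Pi.single b 1 - Pi.single a 1)) < 0 := by
  obtain ⟨u, hu, hab'⟩ := exists_potential_of_not_reflTransGen hba
  obtain ⟨g, hg⟩ := LinearMap.exists_leftInverse_of_injective _ hY
  let W := Fintype.linearCombination ℝ u ∘ₗ (edgeSpan R).subtype ∘ₗ g
  have hW : ∀ i j, R i j → W (Y (Pi.single j 1 - Pi.single i 1)) = u j - u i := by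
    intro i j hij
    have hd : Pi.single j 1 - Pi.single i 1 ∈ edgeSpan R :=
      Submodule.subset_span ⟨i, j, hij, rfl⟩
    have hgY := LinearMap.congr_fun hg ⟨_, hd⟩
    simp only [LinearMap.comp_apply, LinearMap.domRestrict_apply, LinearMap.id_apply] at hgY
    simp only [W, LinearMap.comp_apply, hgY, Submodule.subtype_apply]
    simp [Fintype.linearCombination_apply_single]
  refine ⟨W, fun i j hij => ?_, ?_⟩
  · linarith [hW i j hij, hu i j hij]
  · linarith [hW a b hab]

end Graph

section Network

variable {n : ℕ} (E : ReactionEdges n)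

lemma fst_mem_vertexSet {e : (Fin n → ℕ) × (Fin n → ℕ)} (he : e ∈ E) : e.1 ∈ vertexSet E :=
  Finset.mem_union_left _ (Finset.mem_image_of_mem _ he)

lemma snd_mem_vertexSet {e : (Fin n → ℕ) × (Fin n → ℕ)} (he : e ∈ E) : e.2 ∈ vertexSet E :=
  Finset.mem_union_right _ (Finset.mem_image_of_mem _ he)

def reactionRel (a b : {v // v ∈ vertexSet E}) : Prop :=
  ((a : Fin n → ℕ), (b : Fin n → ℕ)) ∈ E

noncomputable def complexMap : ({v // v ∈ vertexSet E} → ℝ) →ₗ[ℝ] (Fin n → ℝ) :=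
  Fintype.linearCombination ℝ fun v i => (v.1 i : ℝ)

lemma complexMap_single_sub_single (a b : {v // v ∈ vertexSet E}) :
    complexMap E (Pi.single b 1 - Pi.single a 1) = reactionVector (a.1, b.1) := by
  ext i
  simp [complexMap, Fintype.linearCombination_apply_single, reactionVector]

lemma map_complexMap_edgeSpan :
    (edgeSpan (reactionRel E)).map (complexMap E) = stoichSubspace E := by
  rw [edgeSpan, Submodule.map_span, stoichSubspace]
  congr 1
  ext v
  constructor
  · rintro ⟨_, ⟨a, b, hab, rfl⟩, rfl⟩
    exact ⟨_, hab, complexMap_single_sub_single E a b⟩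
  · rintro ⟨e, he, rfl⟩
    exact ⟨_, ⟨⟨e.1, fst_mem_vertexSet E he⟩, ⟨e.2, snd_mem_vertexSet E he⟩, he, rfl⟩,
      complexMap_single_sub_single E _ _⟩

variable {E}

lemma ker_complexMap_domRestrict_eq_bot
    (hdef : (vertexSet E).card = numLinkageClasses E + finrank ℝ (stoichSubspace E)) :
    LinearMap.ker ((complexMap E).domRestrict (edgeSpan (reactionRel E))) = ⊥ := by
  have hrank := LinearMap.finrank_range_add_finrank_ker
    ((complexMap E).domRestrict (edgeSpan (reactionRel E)))
  have hle := finrank_edgeSpan_add_card_quotient_le (R := reactionRel E)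
  rw [LinearMap.range_domRestrict, map_complexMap_edgeSpan] at hrank
  rw [Fintype.card_coe] at hle
  change _ + numLinkageClasses E ≤ _ at hle
  rw [← Submodule.finrank_eq_zero]
  omega

theorem exists_linear_lyapunov
    (hdef : (vertexSet E).card = numLinkageClasses E + finrank ℝ (stoichSubspace E))
    (hnwr : ¬ WeaklyReversible E) :
    ∃ W : (Fin n → ℝ) →ₗ[ℝ] ℝ,
      (∀ e ∈ E, W (reactionVector e) ≤ 0) ∧ ∃ e ∈ E, W (reactionVector e) < 0 := by
  simp only [WeaklyReversible, not_forall] at hnwr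
  obtain ⟨e₀, he₀, hback⟩ := hnwr
  obtain ⟨W, hW, hW₀⟩ := exists_functional_of_ker_domRestrict_eq_bot (complexMap E)
    (ker_complexMap_domRestrict_eq_bot hdef) (a := ⟨e₀.1, fst_mem_vertexSet E he₀⟩)
    (b := ⟨e₀.2, snd_mem_vertexSet E he₀⟩) he₀ fun h => hback <|
      Relation.ReflTransGen.lift (p := fun a b => (a, b) ∈ E) Subtype.val (fun _ _ => id) _ _ h
  refine ⟨W, fun e he => ?_, e₀, he₀, by simpa [complexMap_single_sub_single] using hW₀⟩
  simpa [complexMap_single_sub_single] using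
    hW ⟨e.1, fst_mem_vertexSet E he⟩ ⟨e.2, snd_mem_vertexSet E he⟩ he

end Network

lemma sub_mem_of_forall_hasDerivAt_mem {V : Type*} [NormedAddCommGroup V] [NormedSpace ℝ V]
    [FiniteDimensional ℝ V] {S : Submodule ℝ V} {x f : ℝ → V} {t : ℝ} (ht : 0 ≤ t)
    (hx : ∀ s ∈ Icc 0 t, HasDerivAt x (f s) s) (hf : ∀ s ∈ Icc 0 t, f s ∈ S) :
    x t - x 0 ∈ S := by
  by_contra hnot
  obtain ⟨φ, hφ, hφS⟩ := S.exists_dual_map_eq_bot_of_notMem hnot inferInstance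
  let φc := LinearMap.toContinuousLinearMap φ
  have hderiv : ∀ s ∈ Ico 0 t, HasDerivWithinAt (fun s => φc (x s)) 0 (Ici s) s := by
    intro s hs
    have hfS : φ (f s) = 0 := (Submodule.eq_bot_iff _).1 hφS _
      (Submodule.mem_map_of_mem (hf s (Ico_subset_Icc_self hs)))
    simpa [φc, hfS, Function.comp_def] using
      (φc.hasFDerivAt.comp_hasDerivAt s (hx s (Ico_subset_Icc_self hs))).hasDerivWithinAt
  have hconst := constant_of_has_deriv_right_zero
    (fun s hs => (φc.continuous.continuousAt.comp (hx s hs).continuousAt).continuousWithinAt)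
    hderiv t ⟨ht, le_rfl⟩
  exact hφ (by simpa [φc, sub_eq_zero] using hconst)

lemma forall_mem_of_forall_Ico_mem {X : Type*} [TopologicalSpace X] {U : Set X} (hU : IsOpen U)
    {x : ℝ → X} (hx : ContinuousOn x (Ici 0))
    (hstep : ∀ T, 0 ≤ T → (∀ s ∈ Ico 0 T, x s ∈ U) → x T ∈ U) :
    ∀ t, 0 ≤ t → x t ∈ U := by
  by_contra! hbad
  let bad := Ici 0 ∩ x ⁻¹' Uᶜ
  have hclosed : IsClosed bad := hx.preimage_isClosed_of_isClosed isClosed_Ici hU.isClosed_compl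
  have hne : bad.Nonempty := hbad
  have hbdd : BddBelow bad := ⟨0, fun t ht => ht.1⟩
  have hmem := hclosed.csInf_mem hne hbdd
  exact hmem.2 <| hstep _ hmem.1 fun s hs => by
    by_contra h
    exact (csInf_le hbdd ⟨hs.1, h⟩).not_gt hs.2

lemma pos_of_hasDerivAt_ge_neg_mul {g g' : ℝ → ℝ} {C T : ℝ} (hT : 0 ≤ T)
    (hg : ContinuousOn g (Icc 0 T)) (hd : ∀ s ∈ Ioo 0 T, HasDerivAt g (g' s) s)
    (hle : ∀ s ∈ Ioo 0 T, -(C * g s) ≤ g' s) (h0 : 0 < g 0) : 0 < g T := by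
  let G := fun s => Real.exp (C * s) * g s
  have hG : ∀ s ∈ Ioo 0 T, HasDerivAt G (Real.exp (C * s) * (g' s + C * g s)) s := fun s hs =>
    (((hasDerivAt_id' s).const_mul C).exp.mul (hd s hs)).congr_deriv (by ring)
  have hmono : MonotoneOn G (Icc 0 T) := by
    refine monotoneOn_of_deriv_nonneg (convex_Icc 0 T)
      (((continuous_const.mul continuous_id).rexp).continuousOn.mul hg) ?_ ?_ <;>
      rw [interior_Icc]
    · exact fun s hs => (hG s hs).differentiableAt.differentiableWithinAt
    · intro s hs
      rw [(hG s hs).deriv]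
      exact mul_nonneg (Real.exp_pos _).le (by linarith [hle s hs])
  have := hmono ⟨le_rfl, hT⟩ ⟨hT, le_rfl⟩ hT
  simp only [G, mul_zero, Real.exp_zero, one_mul] at this
  exact pos_of_mul_pos_right (h0.trans_le this) (Real.exp_pos _).le

lemma tendsto_atBot_of_hasDerivAt_le_neg {V V' : ℝ → ℝ} {T δ : ℝ} (hδ : 0 < δ)
    (hd : ∀ t, T ≤ t → HasDerivAt V (V' t) t) (hle : ∀ t, T ≤ t → V' t ≤ -δ) :
    Tendsto V atTop atBot := by
  have hdec : ∀ t, T ≤ t → V t - V T ≤ -δ * (t - T) := fun t ht =>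
    (convex_Ici T).image_sub_le_mul_sub_of_deriv_le
      (fun s hs => (hd s hs).continuousAt.continuousWithinAt)
      (fun s hs => (hd s (interior_subset hs)).differentiableAt.differentiableWithinAt)
      (fun s hs => (hd s (interior_subset hs)).deriv ▸ hle s (interior_subset hs))
      T self_mem_Ici t ht ht
  refine tendsto_atBot_mono' atTop ((eventually_ge_atTop T).mono fun t ht =>
    (by linarith [hdec t ht] : V t ≤ -(δ * t - (V T + δ * T)))) ?_
  exact tendsto_neg_atTop_atBot.comp
    (tendsto_atTop_add_const_right _ _ (tendsto_id.const_mul_atTop hδ))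

lemma exists_pos_eventually_le_of_liminf_ne_zero {α : Type*} {l : Filter α} [l.NeBot]
    {u : α → ℝ} {M : ℝ} (h0 : ∀ᶠ t in l, 0 ≤ u t) (hM : ∀ᶠ t in l, u t ≤ M)
    (hl : liminf u l ≠ 0) : ∃ c > 0, ∀ᶠ t in l, c ≤ u t := by
  have hL : 0 < liminf u l :=
    (le_liminf_of_le (isBoundedUnder_of_eventually_le hM).isCoboundedUnder_flip h0).lt_of_ne'
      hl
  exact ⟨liminf u l / 2, half_pos hL, (eventually_lt_of_lt_liminf (half_lt_self hL)
    (isBoundedUnder_of_eventually_ge h0)).mono fun _ => le_of_lt⟩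

lemma prod_pow_le_mul_pow_sum {ι : Type*} [Fintype ι] [DecidableEq ι] {z : ι → ℝ} {M : ℝ}
    (hM : 1 ≤ M) (hz0 : ∀ j, 0 ≤ z j) (hzM : ∀ j, z j ≤ M) {y : ι → ℕ} {i : ι} (hi : y i ≠ 0) :
    ∏ j, z j ^ y j ≤ z i * M ^ ∑ j, y j := by
  calc ∏ j, z j ^ y j ≤ ∏ j, (if j = i then z i else 1) * M ^ y j := by
        refine Finset.prod_le_prod (fun j _ => pow_nonneg (hz0 j) _) fun j _ => ?_
        split_ifs with hj
        · subst hj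
          obtain ⟨m, hm⟩ := Nat.exists_eq_succ_of_ne_zero hi
          rw [hm, pow_succ', pow_succ']
          exact mul_le_mul_of_nonneg_left ((pow_le_pow_left₀ (hz0 j) (hzM j) m).trans
            (le_mul_of_one_le_left (pow_nonneg (zero_le_one.trans hM) m) hM)) (hz0 j)
        · simpa using pow_le_pow_left₀ (hz0 j) (hzM j) _
    _ = z i * M ^ ∑ j, y j := by
        rw [Finset.prod_mul_distrib, Finset.prod_ite_eq', Finset.prod_pow_eq_pow_sum]
        simp

section MassAction

variable {n : ℕ} {E : ReactionEdges n} {k : (Fin n → ℕ) × (Fin n → ℕ) → ℝ}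

lemma neg_mul_le_massActionField_apply (hk : ∀ e ∈ E, 0 ≤ k e) {M : ℝ} (hM : 1 ≤ M)
    {z : Fin n → ℝ} (hz0 : ∀ j, 0 ≤ z j) (hzM : ∀ j, z j ≤ M) (i : Fin n) :
    -((∑ e ∈ E, k e * e.1 i * M ^ ∑ j, e.1 j) * z i) ≤ massActionField E k z i := by
  rw [massActionField, Finset.sum_apply, Finset.sum_mul, ← Finset.sum_neg_distrib]
  refine Finset.sum_le_sum fun e he => ?_
  simp only [Pi.smul_apply, smul_eq_mul, reactionVector]
  have hmono : (e.1 i : ℝ) * ∏ j, z j ^ e.1 j ≤ e.1 i * (z i * M ^ ∑ j, e.1 j) := by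
    rcases eq_or_ne (e.1 i) 0 with h | h
    · simp [h]
    · exact mul_le_mul_of_nonneg_left (prod_pow_le_mul_pow_sum hM hz0 hzM h) (Nat.cast_nonneg _)
  have hprod : 0 ≤ ∏ j, z j ^ e.1 j := Finset.prod_nonneg fun j _ => pow_nonneg (hz0 j) _
  nlinarith [mul_le_mul_of_nonneg_left hmono (hk e he),
    mul_nonneg (mul_nonneg (hk e he) hprod) (Nat.cast_nonneg (α := ℝ) (e.2 i))]

lemma map_massActionField (W : (Fin n → ℝ) →ₗ[ℝ] ℝ) (z : Fin n → ℝ) :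
    W (massActionField E k z) = ∑ e ∈ E, k e * (∏ j, z j ^ e.1 j) * W (reactionVector e) := by
  simp [massActionField, map_sum, map_smul]

lemma map_massActionField_le {W : (Fin n → ℝ) →ₗ[ℝ] ℝ} (hW : ∀ e ∈ E, W (reactionVector e) ≤ 0)
    (hk : ∀ e ∈ E, 0 ≤ k e) {z : Fin n → ℝ} (hz : ∀ j, 0 ≤ z j) {e₀} (he₀ : e₀ ∈ E) :
    W (massActionField E k z) ≤ k e₀ * (∏ j, z j ^ e₀.1 j) * W (reactionVector e₀) := by
  rw [map_massActionField, ← Finset.sum_singleton (fun e => k e * (∏ j, z j ^ e.1 j) *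
    W (reactionVector e)) e₀]
  exact Finset.sum_le_sum_of_subset_of_nonpos' (Finset.singleton_subset_iff.2 he₀)
    fun e he _ => mul_nonpos_of_nonneg_of_nonpos
      (mul_nonneg (hk e he) (Finset.prod_nonneg fun j _ => pow_nonneg (hz j) _)) (hW e he)

lemma massActionField_mem_stoichSubspace (z : Fin n → ℝ) :
    massActionField E k z ∈ stoichSubspace E :=
  Submodule.sum_mem _ fun e he => Submodule.smul_mem _ _ (Submodule.subset_span ⟨e, he, rfl⟩)

end MassAction

lemma exists_forall_apply_le_of_isBounded {ι : Type*} [Fintype ι] {s : Set (ι → ℝ)}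
    (hs : Bornology.IsBounded s) : ∃ M, 1 ≤ M ∧ ∀ z ∈ s, ∀ i, z i ≤ M := by
  obtain ⟨R, hR⟩ := isBounded_iff_forall_norm_le.1 hs
  exact ⟨max R 1, le_max_right _ _, fun z hz i =>
    (Real.le_norm_self _).trans ((norm_le_pi_norm z i).trans ((hR z hz).trans (le_max_left _ _)))⟩

section Solution

variable {n : ℕ} {E : ReactionEdges n} {k : (Fin n → ℕ) × (Fin n → ℕ) → ℝ} {x : ℝ → Fin n → ℝ}

lemma sub_mem_stoichSubspace_of_hasDerivAt
    (hode : ∀ t ∈ Ici (0 : ℝ), HasDerivAt x (massActionField E k (x t)) t) {t : ℝ} (ht : 0 ≤ t) :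
    x t - x 0 ∈ stoichSubspace E :=
  sub_mem_of_forall_hasDerivAt_mem ht (fun s hs => hode s hs.1)
    fun _ _ => massActionField_mem_stoichSubspace _

lemma pos_of_hasDerivAt_massActionField (hk : ∀ e ∈ E, 0 ≤ k e) (hx0 : ∀ i, 0 < x 0 i)
    (hbdd : Bornology.IsBounded {z : Fin n → ℝ | (∀ i, 0 < z i) ∧ z - x 0 ∈ stoichSubspace E})
    (hode : ∀ t ∈ Ici (0 : ℝ), HasDerivAt x (massActionField E k (x t)) t) :
    ∀ t, 0 ≤ t → ∀ i, 0 < x t i := by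
  obtain ⟨M, hM, hKM⟩ := exists_forall_apply_le_of_isBounded hbdd
  have hcont : ContinuousOn x (Ici 0) := fun t ht => (hode t ht).continuousAt.continuousWithinAt
  have hU : IsOpen {z : Fin n → ℝ | ∀ i, 0 < z i} := by
    simpa only [ofPred_forall] using
      isOpen_iInter_of_finite fun i => isOpen_lt continuous_const (continuous_apply i)
  refine forall_mem_of_forall_Ico_mem hU hcont fun T hT hpos i => ?_
  have hbox : ∀ s ∈ Ioo 0 T, ∀ j, 0 ≤ x s j ∧ x s j ≤ M := fun s hs j =>
    ⟨(hpos s ⟨hs.1.le, hs.2⟩ j).le,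
      hKM _ ⟨hpos s ⟨hs.1.le, hs.2⟩, sub_mem_stoichSubspace_of_hasDerivAt hode hs.1.le⟩ j⟩
  exact pos_of_hasDerivAt_ge_neg_mul hT
    ((continuous_apply i).comp_continuousOn (hcont.mono Icc_subset_Ici_self))
    (fun s hs => hasDerivAt_pi.1 (hode s hs.1.le) i)
    (fun s hs => neg_mul_le_massActionField_apply hk hM (fun j => (hbox s hs j).1)
      (fun j => (hbox s hs j).2) i)
    (hx0 i)

lemma tendsto_atBot_of_hasDerivAt_massActionField {W : (Fin n → ℝ) →ₗ[ℝ] ℝ}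
    (hW : ∀ e ∈ E, W (reactionVector e) ≤ 0) {e₀} (he₀ : e₀ ∈ E)
    (hW₀ : W (reactionVector e₀) < 0) (hk : ∀ e ∈ E, 0 < k e)
    (hode : ∀ t ∈ Ici (0 : ℝ), HasDerivAt x (massActionField E k (x t)) t)
    {c : Fin n → ℝ} (hc : ∀ i, 0 < c i) (hxc : ∀ᶠ t in atTop, ∀ i, c i ≤ x t i) :
    Tendsto (fun t => W (x t)) atTop atBot := by
  obtain ⟨T, hT⟩ := eventually_atTop.1 (hxc.and (eventually_ge_atTop 0))
  have hδ : 0 < -(k e₀ * (∏ j, c j ^ e₀.1 j) * W (reactionVector e₀)) :=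
    neg_pos.2 (mul_neg_of_pos_of_neg
      (mul_pos (hk e₀ he₀) (Finset.prod_pos fun j _ => pow_pos (hc j) _)) hW₀)
  refine tendsto_atBot_of_hasDerivAt_le_neg hδ
    (fun t ht => (LinearMap.toContinuousLinearMap W).hasFDerivAt.comp_hasDerivAt t
      (hode t (hT t ht).2)) fun t ht => ?_
  have hcx := (hT t ht).1
  rw [neg_neg]
  calc W (massActionField E k (x t))
      ≤ k e₀ * (∏ j, x t j ^ e₀.1 j) * W (reactionVector e₀) :=
        map_massActionField_le hW (fun e he => (hk e he).le)
          (fun j => (hc j).le.trans (hcx j)) he₀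
    _ ≤ k e₀ * (∏ j, c j ^ e₀.1 j) * W (reactionVector e₀) :=
        mul_le_mul_of_nonpos_right (mul_le_mul_of_nonneg_left (Finset.prod_le_prod
          (fun j _ => pow_nonneg (hc j).le _) fun j _ => pow_le_pow_left₀ (hc j).le (hcx j) _)
          (hk e₀ he₀).le) hW₀.le

end Solution

theorem weak_extinction_deficiency_zero_general (n : ℕ) (E : ReactionEdges n)
    (hdef : (vertexSet E).card
      = numLinkageClasses E + Module.finrank ℝ (stoichSubspace E))
    (hnwr : ¬ WeaklyReversible E)
    (k : (Fin n → ℕ) × (Fin n → ℕ) → ℝ) (hk : ∀ e ∈ E, 0 < k e)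
    (x0 : Fin n → ℝ) (hx0 : ∀ i, 0 < x0 i)
    (hbdd : Bornology.IsBounded
      {x : Fin n → ℝ | (∀ i, 0 < x i) ∧ x - x0 ∈ stoichSubspace E})
    (x : ℝ → Fin n → ℝ) (hx0eq : x 0 = x0)
    (hode : ∀ t ∈ Set.Ici (0 : ℝ), HasDerivAt x (massActionField E k (x t)) t) :
    ∃ i, Filter.liminf (fun t => x t i) Filter.atTop = 0 := by
  subst hx0eq
  obtain ⟨W, hW, e₀, he₀, hW₀⟩ := exists_linear_lyapunov hdef hnwr
  have hpos := pos_of_hasDerivAt_massActionField (fun e he => (hk e he).le) hx0 hbdd hode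
  have hK : ∀ᶠ t in atTop, (∀ i, 0 < x t i) ∧ x t - x 0 ∈ stoichSubspace E :=
    (eventually_ge_atTop 0).mono fun t ht =>
      ⟨hpos t ht, sub_mem_stoichSubspace_of_hasDerivAt hode ht⟩
  obtain ⟨M, -, hM⟩ := exists_forall_apply_le_of_isBounded hbdd
  by_contra! hlim
  choose c hc hxc using fun i => exists_pos_eventually_le_of_liminf_ne_zero
    (hK.mono fun t ht => (ht.1 i).le) (hK.mono fun t ht => hM _ ht i) (hlim i)
  obtain ⟨m, hm⟩ := ((LinearMap.toContinuousLinearMap W).lipschitz.isBounded_image hbdd).bddBelow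
  obtain ⟨t, hWt, hxt⟩ := ((tendsto_atBot_of_hasDerivAt_massActionField hW he₀ hW₀ hk hode hc
    (eventually_all.2 hxc)).eventually_lt_atBot m).and hK |>.exists
  exact hWt.not_ge (hm ⟨x t, hxt, rfl⟩)

/-- **Weak extinction for deficiency-zero, non–weakly reversible networks.**
Let `G` be a deficiency-zero reaction network (`|V| = ℓ + dim S_G`, vertices
in `ℤ_{≥0}^n`) that is not weakly reversible. Then for any positive rate
constants `k` and any initial condition `x₀` in the open positive orthant
whose stoichiometric compatibility class `(x₀ + S_G) ∩ ℝ^n_{>0}` is bounded,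
the solution `x(t)` of the mass-action system satisfies
`liminf_{t→∞} x_i(t) = 0` for at least one index `i`. -/
theorem weak_extinction_deficiency_zero (n : ℕ) (E : ReactionEdges n)
    (hNoLoop : ∀ e ∈ E, e.1 ≠ e.2)
    (hdef : (vertexSet E).card
      = numLinkageClasses E + Module.finrank ℝ (stoichSubspace E))
    (hnwr : ¬ WeaklyReversible E)
    (k : (Fin n → ℕ) × (Fin n → ℕ) → ℝ) (hk : ∀ e ∈ E, 0 < k e)
    (x0 : Fin n → ℝ) (hx0 : ∀ i, 0 < x0 i)
    (hbdd : Bornology.IsBounded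
      {x : Fin n → ℝ | (∀ i, 0 < x i) ∧ x - x0 ∈ stoichSubspace E})
    (x : ℝ → Fin n → ℝ) (hx0eq : x 0 = x0)
    (hode : ∀ t ∈ Set.Ici (0 : ℝ), HasDerivAt x (massActionField E k (x t)) t) :
    ∃ i, Filter.liminf (fun t => x t i) Filter.atTop = 0 :=
  weak_extinction_deficiency_zero_general n E hdef hnwr k hk x0 hx0 hbdd x hx0eq hode
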